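/- Let Δx > 0 and let (v_p)_{p∈ℤ} be a real sequence with Σ_{p∈ℤ} |v_p| < ∞. Define c_{i+1/2} = Δx Σ_{p∈ℤ} μ(x_{i+1/2−p}) β(v_p), where x_{i+1/2−p} = (i − p)Δx + Δx/2. Then Σ_{i∈ℤ} | ν(c_{i+1/2}) − ν(c_{i−1/2}) | ≤ Lip(ν) Lip(β) ( Δx Σ_{p∈ℤ} |v_p| ) ∫_ℝ |μ'(x)| dx. -/

import Mathlib

/-!
Write `m_k = μ(kΔx + Δx/2)` and `w_p = β(v_p)`, so that `c_{i+1/2} = Δx (m ⋆ w)_i` and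
`c_{i+1/2} − c_{i−1/2} = Δx ((δm) ⋆ w)_i` with `δm_k = m_k − m_{k−1}`. As `ν` is Lipschitz,
Young's inequality `‖a ⋆ b‖₁ ≤ ‖a‖₁ ‖b‖₁` on `ℤ` bounds the left-hand side by
`Lip(ν) Δx ‖δm‖₁ ‖w‖₁`. Since `β(0) = 0`, `‖w‖₁ ≤ Lip(β) ‖v‖₁`; and by the fundamental theorem of
calculus `|δm_k| ≤ ∫ |μ'|` over the cell `(x_{k−1/2}, x_{k+1/2}]`, and these cells tile `ℝ`.
-/

open MeasureTheory Set

/-- The discrete convolution `c_{i+1/2} = Δx Σ_p μ(x_{i+1/2−p}) β(v_p)`,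
where `x_{i+1/2−p} = (i − p)Δx + Δx/2`; indexed by `i`. -/
noncomputable def cdisc (μ β : ℝ → ℝ) (Δx : ℝ) (v : ℤ → ℝ) (i : ℤ) : ℝ :=
  Δx * ∑' p : ℤ, μ (((i - p : ℤ) : ℝ) * Δx + Δx / 2) * β (v p)

theorem hasSum_convolution_of_summable_norm {G R : Type*} [AddGroup G] [NormedRing R]
    [CompleteSpace R] {f g : G → R} (hf : Summable fun k => ‖f k‖)
    (hg : Summable fun k => ‖g k‖) :
    HasSum (fun i => ∑' p, f (i - p) * g p) ((∑' k, f k) * ∑' k, g k) := by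
  let e : G × G ≃ G × G :=
    { toFun := fun q => (q.1 - q.2, q.2)
      invFun := fun q => (q.1 + q.2, q.2)
      left_inv := fun q => by simp
      right_inv := fun q => by simp }
  have hprod : HasSum (fun q : G × G => f q.1 * g q.2) ((∑' k, f k) * ∑' k, g k) := by
    rw [tsum_mul_tsum_of_summable_norm hf hg]
    exact (summable_mul_of_summable_norm hf hg).hasSum
  have hsheared : HasSum (fun q : G × G => f (q.1 - q.2) * g q.2) ((∑' k, f k) * ∑' k, g k) :=
    e.hasSum_iff.mpr hprod
  exact hsheared.prod_fiberwise fun i => (hsheared.summable.prod_factor i).hasSum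

theorem abs_tsum_mul_sub_tsum_mul_le {ι : Type*} {a b w : ι → ℝ} {M : ℝ}
    (ha : ∀ p, |a p| ≤ M) (hb : ∀ p, |b p| ≤ M) (hw : Summable fun p => |w p|) :
    |∑' p, a p * w p - ∑' p, b p * w p| ≤ ∑' p, |a p - b p| * |w p| := by
  have hsummable {c : ι → ℝ} (hc : ∀ p, |c p| ≤ M) : Summable fun p => c p * w p :=
    .of_norm_bounded (hw.mul_left M) fun p => by
      rw [Real.norm_eq_abs, abs_mul]
      exact mul_le_mul_of_nonneg_right (hc p) (abs_nonneg _)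
  have hdiff := (hsummable ha).sub (hsummable hb)
  rw [← (hsummable ha).tsum_sub (hsummable hb)]
  calc |∑' p, (a p * w p - b p * w p)| ≤ ∑' p, |a p * w p - b p * w p| := by
        simpa only [Real.norm_eq_abs] using norm_tsum_le_tsum_norm hdiff.norm
    _ = ∑' p, |a p - b p| * |w p| := by simp only [← sub_mul, abs_mul]

theorem abs_sub_le_setIntegral_Ioc_abs_deriv {f : ℝ → ℝ} (hf : Differentiable ℝ f)
    (hf' : Integrable (deriv f)) {a b : ℝ} (hab : a ≤ b) :
    |f b - f a| ≤ ∫ t in Ioc a b, |deriv f t| := by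
  rw [← intervalIntegral.integral_deriv_eq_sub (fun t _ => hf t) (hf'.intervalIntegrable),
    ← intervalIntegral.integral_of_le hab]
  exact intervalIntegral.abs_integral_le_integral_abs hab

theorem hasSum_setIntegral_Ioc_mul_add {E : Type*} [NormedAddCommGroup E] [NormedSpace ℝ E]
    {ρ : Measure ℝ} {f : ℝ → E} (hf : Integrable f ρ) {p : ℝ} (hp : 0 < p) (a : ℝ) :
    HasSum (fun n : ℤ => ∫ t in Ioc ((n - 1) * p + a) (n * p + a), f t ∂ρ) (∫ t, f t ∂ρ) := by
  have hcell (n : ℤ) :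
      Ioc ((n - 1) * p + a) (n * p + a) = Ioc (a - p + n • p) (a - p + (n + 1) • p) := by
    simp only [zsmul_eq_mul]; push_cast; congr 1 <;> ring
  have := hasSum_integral_iUnion (fun _ => measurableSet_Ioc)
    (pairwise_disjoint_Ioc_add_zsmul (a - p) p) hf.integrableOn
  rw [iUnion_Ioc_add_zsmul hp (a - p), Measure.restrict_univ] at this
  simpa only [hcell] using this

theorem summable_abs_sub_mul_add {f : ℝ → ℝ} (hf : Differentiable ℝ f)
    (hf' : Integrable (deriv f)) {p : ℝ} (hp : 0 < p) (a : ℝ) :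
    Summable fun n : ℤ => |f (n * p + a) - f ((n - 1) * p + a)| :=
  .of_nonneg_of_le (fun _ => abs_nonneg _)
    (fun _ => abs_sub_le_setIntegral_Ioc_abs_deriv hf hf' (by nlinarith))
    (hasSum_setIntegral_Ioc_mul_add hf'.abs hp a).summable

theorem tsum_abs_sub_mul_add_le_integral_abs_deriv {f : ℝ → ℝ} (hf : Differentiable ℝ f)
    (hf' : Integrable (deriv f)) {p : ℝ} (hp : 0 < p) (a : ℝ) :
    ∑' n : ℤ, |f (n * p + a) - f ((n - 1) * p + a)| ≤ ∫ t, |deriv f t| :=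
  hasSum_le (fun _ => abs_sub_le_setIntegral_Ioc_abs_deriv hf hf' (by nlinarith))
    (summable_abs_sub_mul_add hf hf' hp a).hasSum (hasSum_setIntegral_Ioc_mul_add hf'.abs hp a)

theorem abs_cdisc_sub_cdisc_le {μ β : ℝ → ℝ} {Δx : ℝ} {v : ℤ → ℝ} (hΔx : 0 ≤ Δx)
    (hμb : ∃ M, ∀ x, |μ x| ≤ M) (hw : Summable fun p => |β (v p)|) (i : ℤ) :
    |cdisc μ β Δx v i - cdisc μ β Δx v (i - 1)| ≤
      Δx * ∑' p : ℤ, |μ (((i - p : ℤ) : ℝ) * Δx + Δx / 2) -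
        μ ((((i - p : ℤ) : ℝ) - 1) * Δx + Δx / 2)| * |β (v p)| := by
  obtain ⟨M, hM⟩ := hμb
  have hshift (p : ℤ) : ((i - 1 - p : ℤ) : ℝ) = ((i - p : ℤ) : ℝ) - 1 := by push_cast; ring
  simp only [cdisc, hshift, ← mul_sub, abs_mul, abs_of_nonneg hΔx]
  gcongr
  exact abs_tsum_mul_sub_tsum_mul_le (fun _ => hM _) (fun _ => hM _) hw

theorem stmt16_general (ν β μ : ℝ → ℝ) (Lν Lβ : NNReal)
    (hν : LipschitzWith Lν ν) (hβ : LipschitzWith Lβ β)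
    (hβ0 : β 0 = 0)
    (hμ : ContDiff ℝ 1 μ) (hμb : ∃ M, ∀ x, |μ x| ≤ M)
    (hμ' : Integrable (deriv μ))
    (Δx : ℝ) (hΔx : 0 < Δx) (v : ℤ → ℝ) (hv : Summable fun p : ℤ => |v p|) :
    (∑' i : ℤ, |ν (cdisc μ β Δx v i) - ν (cdisc μ β Δx v (i - 1))|)
      ≤ (Lν : ℝ) * (Lβ : ℝ) * (Δx * ∑' p : ℤ, |v p|) * ∫ x : ℝ, |deriv μ x| := by
  have hμd : Differentiable ℝ μ := hμ.differentiable one_ne_zero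
  set δm : ℤ → ℝ := fun k => |μ (k * Δx + Δx / 2) - μ ((k - 1) * Δx + Δx / 2)|
  set w : ℤ → ℝ := fun p => |β (v p)|
  have hwv (p : ℤ) : w p ≤ Lβ * |v p| := hβ.norm_le_mul hβ0 (v p)
  have hw : Summable w := .of_nonneg_of_le (fun _ => abs_nonneg _) hwv (hv.mul_left _)
  have hδm : Summable δm := summable_abs_sub_mul_add hμd hμ' hΔx _
  have hconv : HasSum (fun i => ∑' p, δm (i - p) * w p) ((∑' k, δm k) * ∑' p, w p) :=
    hasSum_convolution_of_summable_norm hδm.norm hw.norm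
  have hLip (i : ℤ) : |ν (cdisc μ β Δx v i) - ν (cdisc μ β Δx v (i - 1))| ≤
      Lν * (Δx * ∑' p, δm (i - p) * w p) :=
    (hν.dist_le_mul _ _).trans (by gcongr; exact abs_cdisc_sub_cdisc_le hΔx.le hμb hw i)
  have hconv_summable : Summable fun i => Lν * (Δx * ∑' p, δm (i - p) * w p) :=
    (hconv.summable.mul_left _).mul_left _
  have hw_le : ∑' p, w p ≤ Lβ * ∑' p, |v p| := by
    rw [← tsum_mul_left]
    exact hw.tsum_le_tsum hwv (hv.mul_left _)
  calc (∑' i : ℤ, |ν (cdisc μ β Δx v i) - ν (cdisc μ β Δx v (i - 1))|)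
      ≤ ∑' i, Lν * (Δx * ∑' p, δm (i - p) * w p) :=
        (hconv_summable.of_nonneg_of_le (fun _ => abs_nonneg _) hLip).tsum_le_tsum hLip
          hconv_summable
    _ = Lν * Δx * (∑' p, w p) * ∑' k, δm k := by
        rw [tsum_mul_left, tsum_mul_left, hconv.tsum_eq]; ring
    _ ≤ Lν * Δx * (Lβ * ∑' p, |v p|) * ∫ x : ℝ, |deriv μ x| := by
        gcongr
        exact tsum_abs_sub_mul_add_le_integral_abs_deriv hμd hμ' hΔx _
    _ = Lν * Lβ * (Δx * ∑' p, |v p|) * ∫ x : ℝ, |deriv μ x| := by ring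

/-- `Σ_i |ν(c_{i+1/2}) − ν(c_{i−1/2})| ≤ Lip(ν) Lip(β) (Δx Σ_p |v_p|) ∫_ℝ |μ'|`. -/
theorem stmt16 (ν β μ : ℝ → ℝ) (Lν Lβ : NNReal)
    (hν : LipschitzWith Lν ν) (hβ : LipschitzWith Lβ β)
    (hν0 : ν 0 = 0) (hβ0 : β 0 = 0)
    (hμ : ContDiff ℝ 1 μ) (hμb : ∃ M, ∀ x, |μ x| ≤ M)
    (hμ' : Integrable (deriv μ))
    (Δx : ℝ) (hΔx : 0 < Δx) (v : ℤ → ℝ) (hv : Summable fun p : ℤ => |v p|) :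
    (∑' i : ℤ, |ν (cdisc μ β Δx v i) - ν (cdisc μ β Δx v (i - 1))|)
      ≤ (Lν : ℝ) * (Lβ : ℝ) * (Δx * ∑' p : ℤ, |v p|) * ∫ x : ℝ, |deriv μ x| :=
  stmt16_general ν β μ Lν Lβ hν hβ hβ0 hμ hμb hμ' Δx hΔx v hv
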